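/- Let α, β, γ ∈ ℂ satisfy γ = αβ and αβ(α+β) = −2. Then every formal partial derivative ∂F₁/∂xᵢ and ∂F₂/∂xᵢ (0 ≤ i ≤ 5) lies in the ℂ-linear span of the nine quadrics Q₀, Q₁, Q₂, Q₀′, Q₁′, Q₂′, Q₀″, Q₁″, Q₂″; in particular, F₁ and F₂ are singular at every common zero of the nine quadrics. -/

import Mathlib

open MvPolynomial

noncomputable section

abbrev R6 : Type := MvPolynomial (Fin 6) ℂ

def Q0 (α : ℂ) : R6 := X 0 ^ 2 + X 3 ^ 2 + C α * (X 2 * X 4 + X 5 * X 1)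
def Q1 (α : ℂ) : R6 := X 1 ^ 2 + X 4 ^ 2 + C α * (X 3 * X 5 + X 0 * X 2)
def Q2 (α : ℂ) : R6 := X 2 ^ 2 + X 5 ^ 2 + C α * (X 4 * X 0 + X 1 * X 3)
def Q0' (β : ℂ) : R6 := X 0 ^ 2 - X 3 ^ 2 + C β * (X 2 * X 4 - X 5 * X 1)
def Q1' (β : ℂ) : R6 := X 1 ^ 2 - X 4 ^ 2 + C β * (X 3 * X 5 - X 0 * X 2)
def Q2' (β : ℂ) : R6 := X 2 ^ 2 - X 5 ^ 2 + C β * (X 4 * X 0 - X 1 * X 3)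
def Q0'' (γ : ℂ) : R6 := X 0 * X 1 + X 3 * X 4 + C γ * (X 2 * X 5)
def Q1'' (γ : ℂ) : R6 := X 1 * X 2 + X 4 * X 5 + C γ * (X 3 * X 0)
def Q2'' (γ : ℂ) : R6 := X 2 * X 3 + X 5 * X 0 + C γ * (X 4 * X 1)

/-- The set of the nine quadrics. -/
def quadrics (α β γ : ℂ) : Set R6 :=
  {Q0 α, Q1 α, Q2 α, Q0' β, Q1' β, Q2' β, Q0'' γ, Q1'' γ, Q2'' γ}

/-- The cubic `F₁`. -/
def F1 (α β : ℂ) : R6 :=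
  C (2 * (α ^ 2 * β ^ 2 - α - β)) * (X 0 * X 2 * X 4)
    - C 2 * (X 0 ^ 3 + X 2 ^ 3 + X 4 ^ 3)
    + C (2 * (β - α)) * (X 1 * X 2 * X 3 + X 3 * X 4 * X 5 + X 5 * X 0 * X 1)
    + C (α * β * (β - α)) * (X 0 * X 3 ^ 2 + X 2 * X 5 ^ 2 + X 4 * X 1 ^ 2)

/-- The cubic `F₂`. -/
def F2 (α β : ℂ) : R6 :=
  C (2 * (α ^ 2 * β ^ 2 - α - β)) * (X 1 * X 3 * X 5)
    - C 2 * (X 1 ^ 3 + X 3 ^ 3 + X 5 ^ 3)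
    + C (2 * (β - α)) * (X 2 * X 3 * X 4 + X 4 * X 5 * X 0 + X 0 * X 1 * X 2)
    + C (α * β * (β - α)) * (X 1 * X 4 ^ 2 + X 3 * X 0 ^ 2 + X 5 * X 2 ^ 2)

/-!
The cyclic shift `xᵢ ↦ xᵢ₊₁` sends `F₁` to `F₂` and `F₂` to `F₁`, and permutes the nine quadrics
up to sign, so it preserves their span. Since it commutes with `∂/∂xᵢ` up to shifting the index,
all twelve partial derivatives are images of `∂F₁/∂x₀` and `∂F₁/∂x₁` under powers of the shift.
These two are explicit combinations of quadrics, the relation `αβ(α + β) = -2` being what makes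
the `x₂x₄` coefficient of `∂F₁/∂x₀` match.
-/

lemma MvPolynomial.eval_eq_zero_of_mem_span {σ R : Type*} [CommSemiring R]
    {S : Set (MvPolynomial σ R)} {p : σ → R} (hS : ∀ q ∈ S, eval p q = 0)
    {f : MvPolynomial σ R} (hf : f ∈ Submodule.span R S) : eval p f = 0 := by
  have hle : Submodule.span R S ≤ LinearMap.ker (aeval p).toLinearMap :=
    Submodule.span_le.2 fun q hq => by simpa [coe_aeval_eq_eval] using hS q hq
  simpa [coe_aeval_eq_eval] using hle hf

section

variable {α β γ : ℂ}

lemma rename_add_one_F1 : rename (· + 1) (F1 α β) = F2 α β := by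
  simp [F1, F2]

lemma rename_add_one_F2 : rename (· + 1) (F2 α β) = F1 α β := by
  simp only [F1, F2, map_add, map_sub, map_mul, map_pow, rename_X, rename_C, Fin.reduceAdd]
  ring

lemma rename_add_one_mem_span_of_mem_quadrics {q : R6} (hq : q ∈ quadrics α β γ) :
    rename (· + 1) q ∈ Submodule.span ℂ (quadrics α β γ) := by
  have hmem {q : R6} (hq : q ∈ quadrics α β γ) : q ∈ Submodule.span ℂ (quadrics α β γ) :=
    Submodule.subset_span hq
  simp only [quadrics, Set.mem_insert_iff, Set.mem_singleton_iff] at hq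
  rcases hq with rfl | rfl | rfl | rfl | rfl | rfl | rfl | rfl | rfl
  · convert hmem (q := Q1 α) (by simp [quadrics]) using 1; simp [Q0, Q1]
  · convert hmem (q := Q2 α) (by simp [quadrics]) using 1; simp [Q1, Q2]
  · convert hmem (q := Q0 α) (by simp [quadrics]) using 1; simp [Q2, Q0]; ring
  · convert hmem (q := Q1' β) (by simp [quadrics]) using 1; simp [Q0', Q1']
  · convert hmem (q := Q2' β) (by simp [quadrics]) using 1; simp [Q1', Q2']
  · convert neg_mem (hmem (q := Q0' β) (by simp [quadrics])) using 1; simp [Q2', Q0']; ring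
  · convert hmem (q := Q1'' γ) (by simp [quadrics]) using 1; simp [Q0'', Q1'']
  · convert hmem (q := Q2'' γ) (by simp [quadrics]) using 1; simp [Q1'', Q2'']
  · convert hmem (q := Q0'' γ) (by simp [quadrics]) using 1; simp [Q2'', Q0'']; ring

lemma rename_add_one_mem_span_quadrics {f : R6}
    (hf : f ∈ Submodule.span ℂ (quadrics α β γ)) :
    rename (· + 1) f ∈ Submodule.span ℂ (quadrics α β γ) :=
  (Submodule.map_span_le (rename (· + 1)).toLinearMap _ _).2
    (fun _ hq => rename_add_one_mem_span_of_mem_quadrics hq) ⟨f, hf, rfl⟩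


lemma pderiv_zero_F1 (h : α * β * (α + β) = -2) :
    pderiv 0 (F1 α β) =
      C ((α * β * (β - α) - 6) / 2) * Q0 α + C ((-(α * β * (β - α)) - 6) / 2) * Q0' β := by
  apply MvPolynomial.funext
  intro x
  simp [F1, Q0, Q0']
  linear_combination ((x 2 * x 4 * (α + β) + x 1 * x 5 * (α - β)) / 2) * h

lemma pderiv_one_F1 : pderiv 1 (F1 α β) = C (2 * (β - α)) * Q2'' (α * β) := by
  apply MvPolynomial.funext
  intro x
  simp [F1, Q2'']
  ring


lemma pderiv_F1_mem_span_quadrics (h : α * β * (α + β) = -2) (i : Fin 6) :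
    pderiv i (F1 α β) ∈ Submodule.span ℂ (quadrics α β (α * β)) := by
  have hmem {q : R6} (hq : q ∈ quadrics α β (α * β)) :
      q ∈ Submodule.span ℂ (quadrics α β (α * β)) :=
    Submodule.subset_span hq
  have h0 : pderiv 0 (F1 α β) ∈ Submodule.span ℂ (quadrics α β (α * β)) := by
    rw [pderiv_zero_F1 h, ← smul_eq_C_mul, ← smul_eq_C_mul]
    exact add_mem (Submodule.smul_mem _ _ (hmem (by simp [quadrics])))
      (Submodule.smul_mem _ _ (hmem (by simp [quadrics])))
  have h1 : pderiv 1 (F1 α β) ∈ Submodule.span ℂ (quadrics α β (α * β)) := by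
    rw [pderiv_one_F1, ← smul_eq_C_mul]
    exact Submodule.smul_mem _ _ (hmem (by simp [quadrics]))
  have step (j : Fin 6) (hj : pderiv j (F1 α β) ∈ Submodule.span ℂ (quadrics α β (α * β))) :
      pderiv (j + 1 + 1) (F1 α β) ∈ Submodule.span ℂ (quadrics α β (α * β)) := by
    rw [← rename_add_one_F2, pderiv_rename (add_left_injective 1), ← rename_add_one_F1,
      pderiv_rename (add_left_injective 1)]
    exact rename_add_one_mem_span_quadrics
      (rename_add_one_mem_span_quadrics hj)
  fin_cases i
  · exact h0
  · exact h1
  · exact step 0 h0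
  · exact step 1 h1
  · exact step 2 (step 0 h0)
  · exact step 3 (step 1 h1)

lemma pderiv_F2_mem_span_quadrics (h : α * β * (α + β) = -2) (i : Fin 6) :
    pderiv i (F2 α β) ∈ Submodule.span ℂ (quadrics α β (α * β)) := by
  rw [← sub_add_cancel i 1, ← rename_add_one_F1, pderiv_rename (add_left_injective 1)]
  exact rename_add_one_mem_span_quadrics (pderiv_F1_mem_span_quadrics h _)

end

/-- If `γ = αβ` and `αβ(α+β) = −2`, then all partial derivatives of `F₁` and `F₂` lie in the
span of the nine quadrics; in particular `F₁` and `F₂` are singular at every common zero of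
the nine quadrics. -/
theorem pderivs_in_span_of_quadrics (α β γ : ℂ) (hγ : γ = α * β)
    (h : α * β * (α + β) = -2) :
    (∀ i : Fin 6, pderiv i (F1 α β) ∈ Submodule.span ℂ (quadrics α β γ) ∧
      pderiv i (F2 α β) ∈ Submodule.span ℂ (quadrics α β γ)) ∧
    ∀ p : Fin 6 → ℂ, (∀ q ∈ quadrics α β γ, eval p q = 0) →
      ∀ i : Fin 6, eval p (pderiv i (F1 α β)) = 0 ∧ eval p (pderiv i (F2 α β)) = 0 := by
  subst hγ
  have hF1 := pderiv_F1_mem_span_quadrics h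
  have hF2 := pderiv_F2_mem_span_quadrics h
  exact ⟨fun i => ⟨hF1 i, hF2 i⟩, fun p hp i =>
    ⟨eval_eq_zero_of_mem_span hp (hF1 i), eval_eq_zero_of_mem_span hp (hF2 i)⟩⟩
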